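/- For every invertible tensor A ∈ C^{n×n×p}, the tensor equation exp(X) = A has a solution X ∈ C^{n×n×p}; moreover, if X is a solution then X + 2kπi·I is also a solution for every integer k. -/

import Mathlib

/-!
A logarithm of `bcirc A` can be found among the matrices that commute with everything commuting
with `bcirc A`. By Jordan–Chevalley, `bcirc A = n + s` with `n` nilpotent and `s` semisimple, both
polynomials in `bcirc A`, and `s` is invertible. Interpolating `Complex.log` at the eigenvalues of
`s` gives a polynomial `q` with `exp (q s) = s`, and for the nilpotent `k = s⁻¹ n` the truncated
series of `log (1 + k)` has exponential `1 + k`; the sum `L` of these two logarithms satisfies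
`exp L = s (1 + k) = bcirc A`. Like `bcirc A`, `L` commutes with the block shift, and the matrices
commuting with the block shift are exactly the block circulant ones, so `L = bcirc (tfold L)`.

For the second claim, `2kπi • I` is central and `exp (2kπi) = 1`.
-/
open Matrix Kronecker Complex Polynomial

noncomputable section

/-- Block circulant matrix of a third-order tensor given by its frontal slices. -/
def bcirc {m n p : ℕ} (A : Fin p → Matrix (Fin m) (Fin n) ℂ) :
    Matrix (Fin p × Fin m) (Fin p × Fin n) ℂ :=
  Matrix.of fun jr kc => A (jr.1 - kc.1) jr.2 kc.2

/-- The tensor T-product. -/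
def tmul {m n s p : ℕ} (A : Fin p → Matrix (Fin m) (Fin n) ℂ)
    (B : Fin p → Matrix (Fin n) (Fin s) ℂ) : Fin p → Matrix (Fin m) (Fin s) ℂ :=
  fun i => ∑ j : Fin p, A (i - j) * B j

/-- The identity tensor. -/
def tId {n p : ℕ} [NeZero p] : Fin p → Matrix (Fin n) (Fin n) ℂ :=
  fun i => if i = 0 then 1 else 0

/-- T-product powers of a tensor. -/
def tpow {n p : ℕ} [NeZero p] (A : Fin p → Matrix (Fin n) (Fin n) ℂ) : ℕ → Fin p → Matrix (Fin n) (Fin n) ℂ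
  | 0 => tId
  | k + 1 => tmul (tpow A k) A

/-- Conjugate transpose of a tensor. -/
def tconjT {m n p : ℕ} [NeZero p] (A : Fin p → Matrix (Fin m) (Fin n) ℂ) :
    Fin p → Matrix (Fin n) (Fin m) ℂ :=
  fun i => (A (-i))ᴴ

/-- Invertibility with respect to the T-product. -/
def TInvertible {n p : ℕ} [NeZero p] (A : Fin p → Matrix (Fin n) (Fin n) ℂ) : Prop :=
  ∃ B, tmul A B = tId ∧ tmul B A = tId

/-- `fold` of an `np × n` matrix back into a tensor (first block column). -/
def tfold {n p : ℕ} [NeZero p] (M : Matrix (Fin p × Fin n) (Fin p × Fin n) ℂ) :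
    Fin p → Matrix (Fin n) (Fin n) ℂ :=
  fun i => Matrix.of fun r c => M (i, r) ((0 : Fin p), c)

/-- The primitive root ω = e^{-2πi/p}. -/
def tomega (p : ℕ) : ℂ := Complex.exp (-2 * Real.pi * Complex.I / p)

/-- The (unitary) discrete Fourier matrix. -/
def fourierMat (p : ℕ) : Matrix (Fin p) (Fin p) ℂ :=
  Matrix.of fun j k => tomega p ^ ((j : ℕ) * (k : ℕ)) / Real.sqrt p

/-- Block diagonal matrix with `p` diagonal blocks of size `n × n`. -/
def bdiag {n p : ℕ} (B : Fin p → Matrix (Fin n) (Fin n) ℂ) :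
    Matrix (Fin p × Fin n) (Fin p × Fin n) ℂ :=
  Matrix.of fun jr kc => if jr.1 = kc.1 then B jr.1 jr.2 kc.2 else 0


/-- The tensor exponential T-function: `exp(A) = fold (exp(bcirc A) · Ê₁)`. -/
def texp {n p : ℕ} [NeZero p] (A : Fin p → Matrix (Fin n) (Fin n) ℂ) :
    Fin p → Matrix (Fin n) (Fin n) ℂ :=
  tfold (NormedSpace.exp (bcirc A))


section TruncatedSeries

variable {K : Type*} [Field K]

variable (K) in
def logOneAddTrunc (r : ℕ) : K[X] :=
  ∑ j ∈ Finset.range r, C ((-1 : K) ^ j / (j + 1)) * X ^ (j + 1)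

def expTrunc (r : ℕ) (P : K[X]) : K[X] :=
  ∑ i ∈ Finset.range r, C ((i.factorial : K)⁻¹) * P ^ i

lemma X_dvd_logOneAddTrunc (r : ℕ) : (X : K[X]) ∣ logOneAddTrunc K r :=
  Finset.dvd_sum fun j _ => (dvd_pow_self _ j.succ_ne_zero).mul_left _

variable [CharZero K]

lemma one_add_X_mul_derivative_logOneAddTrunc (r : ℕ) :
    (1 + X) * derivative (logOneAddTrunc K r) = 1 - (-X) ^ r := by
  have hderiv : derivative (logOneAddTrunc K r) = ∑ j ∈ Finset.range r, (-X) ^ j := by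
    refine (map_sum _ _ _).trans (Finset.sum_congr rfl fun j _ => ?_)
    have hj : (j + 1 : K) ≠ 0 := by exact_mod_cast j.succ_ne_zero
    rw [derivative_C_mul_X_pow, Nat.add_sub_cancel, Nat.cast_add_one, div_mul_cancel₀ _ hj,
      neg_pow (X : K[X]), C_pow, C_neg, C_1]
  rw [hderiv]
  linear_combination (-1 : K[X]) * geom_sum_mul (-X : K[X]) r

lemma derivative_expTrunc_succ (r : ℕ) (P : K[X]) :
    derivative (expTrunc (r + 1) P) = expTrunc r P * derivative P := by
  rw [expTrunc, Finset.sum_range_succ', expTrunc, Finset.sum_mul, map_add, map_sum]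
  simp only [pow_zero, mul_one, derivative_C, add_zero, derivative_C_mul, derivative_pow]
  refine Finset.sum_congr rfl fun i _ => ?_
  have hi : (i + 1 : K) ≠ 0 := by exact_mod_cast i.succ_ne_zero
  rw [Nat.add_sub_cancel, ← mul_assoc, ← mul_assoc, ← C_mul, Nat.factorial_succ]
  congr 3
  push_cast
  field_simp

lemma X_pow_succ_dvd_of_X_pow_dvd_one_add_X_mul_derivative_sub {G : K[X]} {r : ℕ}
    (h0 : G.coeff 0 = 0) (h : X ^ r ∣ (1 + X) * derivative G - G) : X ^ (r + 1) ∣ G := by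
  rw [X_pow_dvd_iff] at h ⊢
  intro d hd
  induction d with
  | zero => exact h0
  | succ d ih =>
    have hXd : (X * derivative G).coeff d = d * G.coeff d := by
      cases d <;> simp [coeff_X_mul, coeff_derivative, mul_comm]
    have hcoeff := h d (by omega)
    have hd1 : (d + 1 : K) ≠ 0 := by exact_mod_cast d.succ_ne_zero
    rw [coeff_sub, add_mul, one_mul, coeff_add, hXd, coeff_derivative, ih (by omega)] at hcoeff
    simpa [hd1] using hcoeff

/-- `exp (log (1 + X))` and `1 + X` both solve `(1 + X) F' = F`, and modulo `X ^ (r + 1)` this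
equation determines `F` from `F 0`. -/
lemma X_pow_succ_dvd_expTrunc_logOneAddTrunc_sub (r : ℕ) :
    X ^ (r + 1) ∣ expTrunc (r + 1) (logOneAddTrunc K r) - (1 + X) := by
  set L := logOneAddTrunc K r
  have hL : X ^ r ∣ L ^ r := pow_dvd_pow_of_dvd (X_dvd_logOneAddTrunc r) r
  apply X_pow_succ_dvd_of_X_pow_dvd_one_add_X_mul_derivative_sub
  · have hL0 : L.eval 0 = 0 := by
      rw [← coeff_zero_eq_eval_zero, ← X_dvd_iff]; exact X_dvd_logOneAddTrunc r
    simp [coeff_zero_eq_eval_zero, expTrunc, eval_finsetSum, hL0, Finset.sum_range_succ']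
  · have key : (1 + X) * derivative (expTrunc (r + 1) L - (1 + X)) - (expTrunc (r + 1) L - (1 + X))
        = -(expTrunc r L * (-X) ^ r + C ((r.factorial : K)⁻¹) * L ^ r) := by
      have hsplit : expTrunc (r + 1) L = expTrunc r L + C ((r.factorial : K)⁻¹) * L ^ r :=
        Finset.sum_range_succ _ _
      rw [derivative_sub, derivative_expTrunc_succ, hsplit, mul_sub, ← mul_assoc,
        mul_comm (1 + X), mul_assoc, one_add_X_mul_derivative_logOneAddTrunc]
      simp only [derivative_add, derivative_one, derivative_X]
      ring
    rw [key, dvd_neg, neg_pow]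
    exact dvd_add ((dvd_mul_left _ _).mul_left _) (hL.mul_left _)

end TruncatedSeries

section NilpotentExp

variable {K 𝔸 : Type*} [Field K] [Ring 𝔸] [Algebra K 𝔸]

lemma aeval_eq_zero_of_X_pow_dvd {a : 𝔸} {r : ℕ} (ha : a ^ r = 0) {P : K[X]} (hP : X ^ r ∣ P) :
    aeval a P = 0 := by
  obtain ⟨Q, rfl⟩ := hP
  rw [map_mul, map_pow, aeval_X, ha, zero_mul]

variable [CharZero K] [TopologicalSpace 𝔸] [IsTopologicalRing 𝔸]

lemma exp_eq_sum_of_pow_eq_zero {a : 𝔸} {N : ℕ} (h : a ^ N = 0) :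
    NormedSpace.exp a = ∑ i ∈ Finset.range N, (i.factorial : K)⁻¹ • a ^ i := by
  rw [NormedSpace.exp_eq_tsum K]
  exact tsum_eq_sum fun i hi => by
    rw [pow_eq_zero_of_le (by simpa using hi) h, smul_zero]

lemma exp_aeval_logOneAddTrunc {k : 𝔸} {r : ℕ} (hk : k ^ r = 0) :
    NormedSpace.exp (aeval k (logOneAddTrunc K r)) = 1 + k := by
  set L := logOneAddTrunc K r
  have hk' : k ^ (r + 1) = 0 := by rw [pow_succ, hk, zero_mul]
  have hnil : aeval k L ^ (r + 1) = 0 := by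
    rw [← map_pow]
    exact aeval_eq_zero_of_X_pow_dvd hk' (pow_dvd_pow_of_dvd (X_dvd_logOneAddTrunc r) _)
  obtain ⟨G, hG⟩ := X_pow_succ_dvd_expTrunc_logOneAddTrunc_sub (K := K) r
  calc NormedSpace.exp (aeval k L)
      = aeval k (expTrunc (r + 1) L) := by
        simp [exp_eq_sum_of_pow_eq_zero (K := K) hnil, expTrunc, Algebra.smul_def]
    _ = aeval k (1 + X + X ^ (r + 1) * G) := by rw [← hG, add_sub_cancel]
    _ = 1 + k := by
        rw [map_add, aeval_eq_zero_of_X_pow_dvd hk' (dvd_mul_right _ _), add_zero]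
        simp

end NilpotentExp

namespace Matrix

variable {m : Type*} [Fintype m] [DecidableEq m]

lemma exists_isNilpotent_isSemisimple {K : Type*} [Field K] [PerfectField K] (M : Matrix m m K) :
    ∃ n ∈ Algebra.adjoin K {M}, ∃ s ∈ Algebra.adjoin K {M},
      IsNilpotent n ∧ Module.End.IsSemisimple (toLin' s) ∧ M = n + s := by
  let e : Matrix m m K ≃ₐ[K] Module.End K (m → K) := toLinAlgEquiv'
  obtain ⟨n, hn, s, hs, hnil, hss, hsum⟩ := Module.End.exists_isNilpotent_isSemisimple (f := e M)
  have hadj : (Algebra.adjoin K {e M}).map e.symm.toAlgHom = Algebra.adjoin K {M} := by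
    rw [AlgHom.map_adjoin, Set.image_singleton]
    simp
  refine ⟨e.symm n, hadj ▸ Subalgebra.mem_map.2 ⟨n, hn, rfl⟩,
    e.symm s, hadj ▸ Subalgebra.mem_map.2 ⟨s, hs, rfl⟩, hnil.map e.symm, ?_, ?_⟩
  · convert hss
    exact toLin'_toMatrix' s
  · exact e.injective (by simp [hsum])

lemma exp_smul_one (c : ℂ) : NormedSpace.exp (c • (1 : Matrix m m ℂ)) = Complex.exp c • 1 := by
  rw [smul_one_eq_diagonal, exp_diagonal, Pi.exp_def, ← Complex.exp_eq_exp_ℂ,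
    smul_one_eq_diagonal]

lemma exp_mulVec_of_mulVec_eq_smul {x : Matrix m m ℂ} {v : m → ℂ} {c : ℂ} (h : x *ᵥ v = c • v) :
    NormedSpace.exp x *ᵥ v = Complex.exp c • v := by
  let : NormedRing (Matrix m m ℂ) := Matrix.linftyOpNormedRing
  let : NormedAlgebra ℂ (Matrix m m ℂ) := Matrix.linftyOpNormedAlgebra
  have hpow (i : ℕ) : x ^ i *ᵥ v = c ^ i • v := by
    induction i with
    | zero => simp
    | succ i ih => rw [pow_succ', ← mulVec_mulVec, ih, mulVec_smul, h, smul_smul, pow_succ]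
  let mulVecHom : Matrix m m ℂ →+ (m → ℂ) :=
    { toFun := (· *ᵥ v), map_zero' := zero_mulVec v, map_add' := fun _ _ => add_mulVec _ _ v }
  have hx := (NormedSpace.exp_series_hasSum_exp' (𝕂 := ℂ) x).map mulVecHom
    (continuous_id.matrix_mulVec continuous_const)
  have hc := (NormedSpace.exp_series_hasSum_exp' (𝕂 := ℂ) c).smul_const v
  rw [Complex.exp_eq_exp_ℂ]
  refine hx.unique (hc.congr_fun fun i => ?_)
  simp [mulVecHom, smul_mulVec, hpow, smul_smul]

lemma exists_exp_aeval_eq_of_isSemisimple {s : Matrix m m ℂ}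
    (hss : Module.End.IsSemisimple (toLin' s)) (hs : IsUnit s) :
    ∃ q : ℂ[X], NormedSpace.exp (aeval s q) = s := by
  set f : Module.End ℂ (m → ℂ) := toLin' s
  let q := Lagrange.interpolate (minpoly ℂ f).roots.toFinset id Complex.log
  refine ⟨q, toLin'.injective (LinearMap.eqLocus_eq_top.1 (eq_top_iff.2 ?_))⟩
  rw [← hss.iSup_eigenspace_eq_top]
  refine iSup_le fun μ v hv => ?_
  obtain rfl | hv0 := eq_or_ne v 0
  · exact Submodule.zero_mem _
  have hvec : f.HasEigenvector μ v := ⟨hv, hv0⟩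
  have hμ : μ ∈ (minpoly ℂ f).roots.toFinset := by
    rw [Multiset.mem_toFinset, mem_roots (minpoly.ne_zero_of_finite ℂ f)]
    exact Module.End.hasEigenvalue_iff_isRoot.1 (Module.End.hasEigenvalue_of_hasEigenvector hvec)
  have hμ0 : μ ≠ 0 := by
    rintro rfl
    exact hv0 (mulVec_injective_iff_isUnit.2 hs (by simpa [f] using hvec.apply_eq_smul))
  have hqv : aeval s q *ᵥ v = Complex.log μ • v := by
    have hqμ : q.eval μ = Complex.log μ :=
      Lagrange.eval_interpolate_at_node _ (Set.injOn_id _) hμ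
    have := Module.End.aeval_apply_of_hasEigenvector (p := q) hvec
    rw [hqμ] at this
    exact (LinearMap.congr_fun (aeval_algHom_apply toLinAlgEquiv'.toAlgHom s q) v).symm.trans this
  show toLin' (NormedSpace.exp (aeval s q)) v = f v
  rw [toLin'_apply, exp_mulVec_of_mulVec_eq_smul hqv, Complex.exp_log hμ0, hvec.apply_eq_smul]

theorem exists_exp_eq_of_isUnit {M : Matrix m m ℂ} (hM : IsUnit M) :
    ∃ L ∈ Subalgebra.centralizer ℂ (Set.centralizer {M}), NormedSpace.exp L = M := by
  set Z := Subalgebra.centralizer ℂ (Set.centralizer {M})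
  have hZ_comm : ∀ x ∈ Z, ∀ y ∈ Z, Commute x y :=
    Set.centralizer_centralizer_comm_of_comm (by simp)
  have aeval_mem {x : Matrix m m ℂ} (hx : x ∈ Z) (P : ℂ[X]) : aeval x P ∈ Z :=
    Algebra.adjoin_le (Set.singleton_subset_iff.2 hx) (aeval_mem_adjoin_singleton ℂ x)
  obtain ⟨n, hn, s, hs, ⟨r, hr⟩, hss, hMns⟩ := exists_isNilpotent_isSemisimple M
  have hnZ : n ∈ Z := Algebra.adjoin_le_centralizer_centralizer ℂ _ hn
  have hsZ : s ∈ Z := Algebra.adjoin_le_centralizer_centralizer ℂ _ hs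
  have hs_unit : IsUnit s := by
    simpa [hMns] using IsNilpotent.isUnit_add_left_of_commute ⟨r, by rw [neg_pow, hr, mul_zero]⟩
      hM (hZ_comm _ hnZ _ (hMns ▸ add_mem hnZ hsZ)).neg_left
  set u := hs_unit.unit
  have hu_invZ : (↑u⁻¹ : Matrix m m ℂ) ∈ Z := fun W hW =>
    (Commute.units_inv_right (u := u) (hsZ W hW)).eq
  set k := (↑u⁻¹ : Matrix m m ℂ) * n
  have hkZ : k ∈ Z := mul_mem hu_invZ hnZ
  have hk : k ^ r = 0 := by rw [(hZ_comm _ hu_invZ _ hnZ).mul_pow, hr, mul_zero]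
  obtain ⟨q, hq⟩ := exists_exp_aeval_eq_of_isSemisimple hss hs_unit
  refine ⟨aeval s q + aeval k (logOneAddTrunc ℂ r),
    add_mem (aeval_mem hsZ q) (aeval_mem hkZ _), ?_⟩
  rw [exp_add_of_commute _ _ (hZ_comm _ (aeval_mem hsZ q) _ (aeval_mem hkZ _)), hq,
    exp_aeval_logOneAddTrunc hk, mul_add, mul_one, ← mul_assoc, IsUnit.mul_val_inv, one_mul, hMns,
    add_comm]

end Matrix

section BlockCirculant

open Fin.NatCast Fin.CommRing

lemma apply_eq_apply_sub_zero_of_add_one {α : Type*} {p : ℕ} [NeZero p] {f : Fin p → Fin p → α}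
    (hf : ∀ j k, f (j + 1) (k + 1) = f j k) (j k : Fin p) : f j k = f (j - k) 0 := by
  have key (a : ℕ) (i : Fin p) : f (i + a) a = f i 0 := by
    induction a with
    | zero => simp
    | succ a ih => rw [Nat.cast_succ, ← add_assoc, hf, ih]
  simpa using key k (j - k)

variable {n p : ℕ} [NeZero p]

def blockShift (n p : ℕ) [NeZero p] : Matrix (Fin p × Fin n) (Fin p × Fin n) ℂ :=
  (Equiv.prodCongrLeft fun _ => Equiv.addRight (1 : Fin p)).toPEquiv.toMatrix

lemma commute_blockShift_iff {W : Matrix (Fin p × Fin n) (Fin p × Fin n) ℂ} :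
    Commute W (blockShift n p) ↔ bcirc (tfold W) = W := by
  have hcomm (V : Matrix (Fin p × Fin n) (Fin p × Fin n) ℂ) :
      Commute V (blockShift n p) ↔ ∀ j r k c, V (j, r) (k - 1, c) = V (j + 1, r) (k, c) := by
    simp [Commute, SemiconjBy, blockShift, PEquiv.toMatrix_toPEquiv_mul,
      PEquiv.mul_toMatrix_toPEquiv, ← Matrix.ext_iff, ← sub_eq_add_neg]
  constructor
  · intro h
    ext ⟨j, r⟩ ⟨k, c⟩
    have hshift (j k : Fin p) : W (j + 1, r) (k + 1, c) = W (j, r) (k, c) := by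
      simpa using ((hcomm W).1 h j r (k + 1) c).symm
    exact (apply_eq_apply_sub_zero_of_add_one (f := fun j k => W (j, r) (k, c)) hshift j k).symm
  · rintro h
    rw [← h, hcomm]
    intro j r k c
    simp only [bcirc, tfold, of_apply, sub_sub_eq_add_sub]

lemma bcirc_tmul {m s : ℕ} (A : Fin p → Matrix (Fin m) (Fin n) ℂ)
    (B : Fin p → Matrix (Fin n) (Fin s) ℂ) : bcirc (tmul A B) = bcirc A * bcirc B := by
  ext ⟨j, r⟩ ⟨k, c⟩
  simp only [bcirc, tmul, of_apply, Matrix.mul_apply, Fintype.sum_prod_type, Matrix.sum_apply]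
  refine Fintype.sum_equiv (Equiv.addRight k) _ _ fun l => ?_
  simp only [Equiv.coe_addRight, add_sub_cancel_right, sub_add_eq_sub_sub, sub_right_comm]

lemma bcirc_tId : bcirc (tId : Fin p → Matrix (Fin n) (Fin n) ℂ) = 1 := by
  ext ⟨j, r⟩ ⟨k, c⟩
  by_cases hjk : j = k <;> simp [bcirc, tId, one_apply, sub_eq_zero, hjk]

lemma tfold_bcirc (A : Fin p → Matrix (Fin n) (Fin n) ℂ) : tfold (bcirc A) = A := by
  ext i r c
  simp [tfold, bcirc]

lemma isUnit_bcirc_of_tInvertible {A : Fin p → Matrix (Fin n) (Fin n) ℂ} (hA : TInvertible A) :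
    IsUnit (bcirc A) := by
  obtain ⟨B, hAB, hBA⟩ := hA
  exact ⟨⟨bcirc A, bcirc B, by rw [← bcirc_tmul, hAB, bcirc_tId],
    by rw [← bcirc_tmul, hBA, bcirc_tId]⟩, rfl⟩

lemma texp_add_smul_tId (X : Fin p → Matrix (Fin n) (Fin n) ℂ) (c : ℂ) :
    texp (X + c • tId) = Complex.exp c • texp X := by
  have hbcirc : bcirc (X + c • tId) = bcirc X + c • 1 := by
    rw [← bcirc_tId]; rfl
  rw [texp, hbcirc, exp_add_of_commute _ _ ((Commute.one_right _).smul_right c),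
    Matrix.exp_smul_one, mul_smul_one]
  rfl

end BlockCirculant

/-- every invertible tensor has a tensor logarithm, and solutions
of `exp(X) = A` are stable under adding `2kπi · I`. -/
theorem texp_eq_of_invertible {n p : ℕ} [NeZero p]
    (A : Fin p → Matrix (Fin n) (Fin n) ℂ) (hA : TInvertible A) :
    (∃ X : Fin p → Matrix (Fin n) (Fin n) ℂ, texp X = A) ∧
      ∀ (X : Fin p → Matrix (Fin n) (Fin n) ℂ) (k : ℤ), texp X = A →
        texp (X + ((2 * (k : ℂ) * Real.pi * Complex.I) • tId)) = A := by
  constructor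
  · obtain ⟨L, hLZ, hL⟩ := Matrix.exists_exp_eq_of_isUnit (isUnit_bcirc_of_tInvertible hA)
    have hS : blockShift n p ∈ Set.centralizer {bcirc A} := by
      simpa [Set.mem_centralizer_iff] using
        (commute_blockShift_iff.2 (by rw [tfold_bcirc])).eq
    have hLS : Commute L (blockShift n p) := (hLZ _ hS).symm
    exact ⟨tfold L, by rw [texp, commute_blockShift_iff.1 hLS, hL, tfold_bcirc]⟩
  · intro X k hX
    rw [texp_add_smul_tId, Complex.exp_eq_one_iff.2 ⟨k, by ring⟩, one_smul, hX]

end
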